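/- arXiv:2111.02103 — 6 statements merged into one kernel-verified Lean document; each statement's English description precedes it below -/
import Mathlib

section
/- Let p ≥ 5 be a prime and let m be an integer with 1 ≤ m ≤ (p−3)/2. Then, as a congruence of p-integral rational numbers modulo p²: −p·Σ_{K=p−(2m+1)}^{p−2} H_K/(K+2m+2) ≡ p·( 2·H_{2m}^{(2)} − 2·H_{2m}·H_{2m+1} + Σ_{k=1}^{2m−1} H_k/(2m−k) ) (mod p²). -/
/-- Harmonic number `H_n = ∑_{i=1}^n 1/i` (with `H_0 = 0`). -/
def H (n : ℕ) : ℚ := ∑ i ∈ Finset.range n, 1 / ((i : ℚ) + 1)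
/-- Generalized harmonic number `H_n^{(2)} = ∑_{i=1}^n 1/i²`. -/
def H2 (n : ℕ) : ℚ := ∑ i ∈ Finset.range n, 1 / ((i : ℚ) + 1) ^ 2
/-- Congruence of `p`-integral rationals modulo `p^k`: the `p`-adic valuation of
`x - y` is at least `k`, expressed via the `p`-adic norm. -/
def ratCongr (p k : ℕ) (x y : ℚ) : Prop :=
  padicNorm p (x - y) ≤ (p : ℚ) ^ (-(k : ℤ))

open Finset

/-! After the shift `K = p - 2m - 1 + k` the left side is `-p ∑_{k < 2m} H_{p-1-(2m-k)} / (p+k+1)`.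
Modulo `p²` we may replace `H_{p-1-j}` by `H_j` (pair `1/i` with `1/(p-i)`) and `p + k + 1` by
`k + 1`. What remains is `-p` times the convolution `∑_{i+j = 2m+1} H_i / j`, which equals
`H_{2m+1}² - H_{2m+1}^{(2)}`; the same identity at `2m - 1` turns the right side into it as well. -/

lemma H_succ (n : ℕ) : H (n + 1) = H n + 1 / ((n : ℚ) + 1) := by
  simp only [H, sum_range_succ]

lemma H2_succ (n : ℕ) : H2 (n + 1) = H2 n + 1 / ((n : ℚ) + 1) ^ 2 := by
  simp only [H2, sum_range_succ]

def harmonicConv (n : ℕ) : ℚ := ∑ k ∈ range n, H (n - k) / ((k : ℚ) + 1)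

lemma sum_range_one_div_mul_reflect (n : ℕ) :
    ∑ k ∈ range (n + 1), 1 / (((k : ℚ) + 1) * (((n - k : ℕ) : ℚ) + 1))
      = 2 * H (n + 1) / ((n : ℚ) + 2) := by
  have hpartial : ∀ k ∈ range (n + 1), 1 / (((k : ℚ) + 1) * (((n - k : ℕ) : ℚ) + 1))
      = (1 / ((k : ℚ) + 1) + 1 / (((n - k : ℕ) : ℚ) + 1)) / ((n : ℚ) + 2) := by
    intro k hk
    have hkn : k ≤ n := Nat.lt_succ_iff.mp (mem_range.mp hk)
    have hpos : (0 : ℚ) < (n : ℚ) - k + 1 := by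
      have : (k : ℚ) ≤ n := by exact_mod_cast hkn
      linarith
    rw [Nat.cast_sub hkn]
    field_simp
    ring
  have hreflect : ∑ k ∈ range (n + 1), 1 / (((n - k : ℕ) : ℚ) + 1) = H (n + 1) := by
    simpa [H] using sum_range_reflect (fun k => 1 / ((k : ℚ) + 1)) (n + 1)
  rw [sum_congr rfl hpartial, ← sum_div, sum_add_distrib, hreflect, H]
  ring

theorem harmonicConv_eq (n : ℕ) : harmonicConv n = H (n + 1) ^ 2 - H2 (n + 1) := by
  induction n with
  | zero => simp [harmonicConv, H, H2]
  | succ n ih =>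
    have hsplit : harmonicConv (n + 1) = ∑ k ∈ range (n + 1),
        (H (n - k) / ((k : ℚ) + 1) + 1 / (((k : ℚ) + 1) * (((n - k : ℕ) : ℚ) + 1))) := by
      refine sum_congr rfl fun k hk => ?_
      rw [show n + 1 - k = n - k + 1 by have := mem_range.mp hk; omega, H_succ]
      field_simp
    have hlast : ∑ k ∈ range (n + 1), H (n - k) / ((k : ℚ) + 1) = harmonicConv n := by
      simp [sum_range_succ, harmonicConv, H]
    rw [hsplit, sum_add_distrib, hlast, sum_range_one_div_mul_reflect, ih,
      H_succ (n + 1), H2_succ (n + 1)]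
    push_cast
    field_simp
    ring

lemma harmonicConv_eq_sum_Icc (n : ℕ) :
    harmonicConv n = ∑ k ∈ Icc 1 n, H k / ((n + 1 - k : ℕ) : ℚ) := by
  refine sum_nbij' (fun k => n - k) (fun k => n - k) ?_ ?_ ?_ ?_ ?_
  · intro k hk; simp only [mem_range, mem_Icc] at hk ⊢; omega
  · intro k hk; simp only [mem_range, mem_Icc] at hk ⊢; omega
  · intro k hk; simp only [mem_range] at hk; omega
  · intro k hk; simp only [mem_Icc] at hk; omega
  · intro k hk
    rw [show n + 1 - (n - k) = k + 1 by have := mem_range.mp hk; omega]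
    push_cast
    rfl

lemma neg_harmonicConv_succ (n : ℕ) :
    -harmonicConv (n + 1) = 2 * H2 (n + 1) - 2 * H (n + 1) * H (n + 1 + 1) + harmonicConv n := by
  rw [harmonicConv_eq, harmonicConv_eq, H_succ (n + 1), H2_succ (n + 1)]
  field_simp
  ring

lemma ratCongr_one_iff {p : ℕ} {x y : ℚ} :
    ratCongr p 1 x y ↔ padicNorm p (x - y) ≤ (p : ℚ)⁻¹ := by
  rw [ratCongr, Nat.cast_one, zpow_neg_one]

namespace ratCongr

variable {p k : ℕ} {x y : ℚ}

lemma symm (h : ratCongr p k x y) : ratCongr p k y x := by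
  rwa [ratCongr, ← neg_sub, padicNorm.neg]

lemma neg (h : ratCongr p k x y) : ratCongr p k (-x) (-y) := by
  rwa [ratCongr, neg_sub_neg, ← neg_sub, padicNorm.neg]

variable [Fact p.Prime]

lemma sum {ι : Type*} {s : Finset ι} {f g : ι → ℚ} (h : ∀ i ∈ s, ratCongr p k (f i) (g i)) :
    ratCongr p k (∑ i ∈ s, f i) (∑ i ∈ s, g i) := by
  rw [ratCongr, ← sum_sub_distrib]
  exact padicNorm.sum_le' h (by positivity)

lemma natCast_mul (h : ratCongr p k x y) : ratCongr p (k + 1) (p * x) (p * y) := by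
  have hp : (p : ℚ) ≠ 0 := by exact_mod_cast (Fact.out : p.Prime).ne_zero
  rw [ratCongr, ← mul_sub, padicNorm.mul, padicNorm.padicNorm_p_of_prime, Nat.cast_succ, neg_add,
    zpow_add₀ hp, zpow_neg_one, mul_comm]
  exact mul_le_mul_of_nonneg_right h (by positivity)

lemma div {u v : ℚ} (hxy : ratCongr p k x y) (huv : ratCongr p k u v)
    (hy : padicNorm p y ≤ 1) (hu : padicNorm p u = 1) (hv : padicNorm p v = 1) :
    ratCongr p k (x / u) (y / v) := by
  have hu0 : u ≠ 0 := fun h => by simp [h] at hu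
  have hv0 : v ≠ 0 := fun h => by simp [h] at hv
  have hsplit : x / u - y / v = (x - y) / u + y * (v - u) / (u * v) := by
    field_simp
    ring
  rw [ratCongr, hsplit]
  refine padicNorm.nonarchimedean.trans (max_le ?_ ?_)
  · rwa [padicNorm.div, hu, div_one]
  · rw [padicNorm.div, padicNorm.mul, padicNorm.mul, hu, hv, mul_one, div_one]
    exact (mul_le_of_le_one_left (padicNorm.nonneg _) hy).trans huv.symm

end ratCongr

section padic

variable {p : ℕ} [Fact p.Prime]

lemma padicNorm_natCast_add_one {n : ℕ} (hn : n + 1 < p) : padicNorm p ((n : ℚ) + 1) = 1 := by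
  rw [← Nat.cast_succ, padicNorm.nat_eq_one_iff]
  exact fun h => absurd (Nat.le_of_dvd n.succ_pos h) (by omega)

lemma padicNorm_H_le_one {n : ℕ} (hn : n < p) : padicNorm p (H n) ≤ 1 :=
  padicNorm.sum_le' (fun i hi => by
    rw [padicNorm.div, padicNorm.one, padicNorm_natCast_add_one (by simp at hi; omega), div_one])
    zero_le_one

lemma padicNorm_one_div_add_one_div_reflect_le {i : ℕ} (hi : i + 2 ≤ p) :
    padicNorm p (1 / ((i : ℚ) + 1) + 1 / (((p - 2 - i : ℕ) : ℚ) + 1)) ≤ (p : ℚ)⁻¹ := by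
  have hp : 2 ≤ p := (Fact.out : p.Prime).two_le
  have hA := padicNorm_natCast_add_one (p := p) (n := i) (by omega)
  have hB := padicNorm_natCast_add_one (p := p) (n := p - 2 - i) (by omega)
  have hsum : ((i : ℚ) + 1) + (((p - 2 - i : ℕ) : ℚ) + 1) = p := by
    have := congrArg (Nat.cast (R := ℚ)) (show p - 2 - i + i + 2 = p by omega)
    push_cast at this
    linarith
  rw [one_div_add_one_div (by positivity) (by positivity), hsum, padicNorm.div, padicNorm.mul,
    hA, hB, padicNorm.padicNorm_p_of_prime, mul_one, div_one]

lemma ratCongr_H_of_add_eq (hp : p ≠ 2) {a b : ℕ} (hab : a + b + 1 = p) :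
    ratCongr p 1 (H a) (H b) := by
  wlog hba : b ≤ a generalizing a b
  · exact (this (by omega) (by omega)).symm
  have hp2 := (Fact.out : p.Prime).two_le
  set f : ℕ → ℚ := fun i => 1 / ((i : ℚ) + 1)
  have hdiff : H a - H b = ∑ i ∈ Ico b a, f i := (sum_Ico_eq_sub f hba).symm
  -- `i ↦ p - 2 - i` maps `[b, a)` onto itself, and `f i + f (p - 2 - i) = p / ((i + 1) (p - 1 - i))`
  have hpair : 2 * (H a - H b) = ∑ i ∈ Ico b a, (f i + f (p - 2 - i)) := by
    rw [sum_add_distrib, sum_Ico_reflect f b (show a ≤ p - 2 + 1 by omega),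
      show p - 2 + 1 - a = b by omega, show p - 2 + 1 - b = a by omega, ← hdiff]
    ring
  have htwo : padicNorm p 2 = 1 := by
    exact_mod_cast (padicNorm.nat_eq_one_iff 2).mpr fun h =>
      hp ((Nat.prime_dvd_prime_iff_eq Fact.out Nat.prime_two).mp h)
  rw [ratCongr_one_iff, ← one_mul (padicNorm p _), ← htwo, ← padicNorm.mul, hpair]
  exact padicNorm.sum_le' (fun i hi => padicNorm_one_div_add_one_div_reflect_le
    (by simp at hi; omega)) (by positivity)

lemma ratCongr_H_div_natCast_add (hp : p ≠ 2) {a b k : ℕ} (hab : a + b + 1 = p) (hk : k + 1 < p) :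
    ratCongr p 1 (H a / ((p : ℚ) + k + 1)) (H b / ((k : ℚ) + 1)) := by
  refine ratCongr.div (ratCongr_H_of_add_eq hp hab) ?_ (padicNorm_H_le_one (by omega)) ?_
    (padicNorm_natCast_add_one hk)
  · rw [ratCongr_one_iff, add_assoc, add_sub_cancel_right, padicNorm.padicNorm_p_of_prime]
  · rw [show (p : ℚ) + k + 1 = ((p + k : ℕ) : ℚ) + 1 by push_cast; ring,
      ← Nat.cast_succ, padicNorm.nat_eq_one_iff]
    intro h
    have := Nat.le_of_dvd k.succ_pos ((Nat.dvd_add_right (dvd_refl p)).mp h)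
    omega

end padic

/-- Lemma 2: modulo `p²`, the truncated sum of shifted divided harmonic numbers. -/
theorem shifted_harmonic_sum_mod_p_sq (p m : ℕ) (hp : p.Prime) (hp5 : 5 ≤ p)
    (hm1 : 1 ≤ m) (hm2 : m ≤ (p - 3) / 2) :
    ratCongr p 2
      (-(p : ℚ) * ∑ K ∈ Finset.Icc (p - (2 * m + 1)) (p - 2),
          H K / ((K : ℚ) + 2 * m + 2))
      ((p : ℚ) * (2 * H2 (2 * m) - 2 * H (2 * m) * H (2 * m + 1)
        + ∑ k ∈ Finset.Icc 1 (2 * m - 1), H k / ((2 * m - k : ℕ) : ℚ))) := by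
  have := Fact.mk hp
  have hlhs : ∑ K ∈ Icc (p - (2 * m + 1)) (p - 2), H K / ((K : ℚ) + 2 * m + 2)
      = ∑ k ∈ range (2 * m), H (p - (2 * m + 1) + k) / ((p : ℚ) + k + 1) := by
    rw [← Ico_add_one_right_eq_Icc, sum_Ico_eq_sum_range,
      show p - 2 + 1 - (p - (2 * m + 1)) = 2 * m by omega]
    refine sum_congr rfl fun k hk => ?_
    rw [Nat.cast_add (p - (2 * m + 1)), Nat.cast_sub (by omega)]
    push_cast
    ring_nf
  have hrhs : 2 * H2 (2 * m) - 2 * H (2 * m) * H (2 * m + 1)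
      + ∑ k ∈ Icc 1 (2 * m - 1), H k / ((2 * m - k : ℕ) : ℚ) = -harmonicConv (2 * m) := by
    obtain ⟨n, hn⟩ : ∃ n, 2 * m = n + 1 := ⟨2 * m - 1, by omega⟩
    rw [hn, Nat.add_sub_cancel, ← harmonicConv_eq_sum_Icc, neg_harmonicConv_succ]
  rw [hlhs, hrhs, neg_mul, ← mul_neg]
  refine (ratCongr.sum fun k hk => ?_).neg.natCast_mul
  have hk := mem_range.mp hk
  exact ratCongr_H_div_natCast_add (by omega) (by omega) (by omega)
end

section
/- Let n ≥ 0 and s ≥ 3 be integers. Then the following identity of rational numbers holds: Σ_{j=1}^n H_j/(j+s) = (1/2)·((H_{n+s})² − H_{n+s}^{(2)}) + Σ_{i=0}^{s−2} (H_{s−1} − H_i)/(n+s−i) − (1/2)·((H_s)² − H_s^{(2)}) − H_{s−1}·H_s + Σ_{k=1}^{s−1} H_k/(s−k). -/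
open Finset

lemma H_zero : H 0 = 0 := sum_range_zero _

lemma half_sq_H_sub_H2_succ (m : ℕ) :
    (1 / 2) * (H (m + 1) ^ 2 - H2 (m + 1)) = (1 / 2) * (H m ^ 2 - H2 m) + H m / ((m : ℚ) + 1) := by
  rw [H_succ, H2_succ]
  field_simp
  ring

lemma sum_range_one_div_add_sub (m t : ℕ) :
    ∑ i ∈ range t, 1 / ((m : ℚ) + t - i) = H (m + t) - H m := by
  induction t with
  | zero => simp
  | succ t ih =>
    rw [sum_range_succ', ← add_assoc, H_succ, add_sub_right_comm (H (m + t)), ← ih]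
    push_cast
    ring_nf

lemma sum_range_one_div_sub_one_div_add_one_sub (t : ℕ) (x : ℚ) :
    ∑ i ∈ range t, (1 / (x - i) - 1 / (x + 1 - i)) = 1 / (x + 1 - t) - 1 / (x + 1) := by
  have h := sum_range_sub (fun i : ℕ => 1 / (x + 1 - i)) t
  simp only [Nat.cast_zero, sub_zero, Nat.cast_succ] at h
  rw [← h]
  exact sum_congr rfl fun i _ => by ring_nf

lemma sum_range_H_sub_mul_one_div_sub_one_div (t : ℕ) (x : ℚ) (hx : (t : ℚ) ≤ x) :
    ∑ i ∈ range t, (H t - H i) * (1 / (x - i) - 1 / (x + 1 - i))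
      = (∑ i ∈ range t, 1 / (x - i)) / (x + 1) := by
  induction t with
  | zero => simp
  | succ t ih =>
    push_cast at hx
    have hxt : x - t ≠ 0 := by linarith
    have hx1 : x + 1 ≠ 0 := by linarith [(t.cast_nonneg : (0 : ℚ) ≤ t)]
    calc ∑ i ∈ range (t + 1), (H (t + 1) - H i) * (1 / (x - i) - 1 / (x + 1 - i))
        = ∑ i ∈ range (t + 1), (H t - H i) * (1 / (x - i) - 1 / (x + 1 - i))
          + (∑ i ∈ range (t + 1), (1 / (x - i) - 1 / (x + 1 - i))) / (t + 1) := by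
          rw [sum_div, ← sum_add_distrib, H_succ]
          exact sum_congr rfl fun i _ => by ring
      _ = (∑ i ∈ range (t + 1), 1 / (x - i)) / (x + 1) := by
          rw [sum_range_succ, sub_self, zero_mul, add_zero, ih (by linarith),
            sum_range_one_div_sub_one_div_add_one_sub, sum_range_succ, Nat.cast_succ,
            show x + 1 - (t + 1) = x - t by ring]
          field_simp
          ring

lemma sum_range_H_succ_div (t : ℕ) :
    ∑ i ∈ range t, H (i + 1) / ((t : ℚ) - i) = ∑ i ∈ range t, H i / ((t : ℚ) + 1 - i) + H t := by
  have h := (sum_range_succ' (fun i => H i / ((t : ℚ) + 1 - i)) t).symm.trans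
    (sum_range_succ (fun i => H i / ((t : ℚ) + 1 - i)) t)
  simp only [H_zero, zero_div, add_zero, Nat.cast_succ, add_sub_add_right_eq_sub,
    add_sub_cancel_left, div_one] at h
  exact h

lemma sum_range_H_sub_div_add_sum_range_H_succ_div (t : ℕ) :
    ∑ i ∈ range t, (H t - H i) / ((t : ℚ) + 1 - i) + ∑ i ∈ range t, H (i + 1) / ((t : ℚ) - i)
      = H t * H (t + 1) := by
  have h := sum_range_one_div_add_sub 1 t
  rw [Nat.cast_one, add_comm 1 t, H_succ 0, H_zero, Nat.cast_zero, zero_add, zero_add, div_one,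
    add_comm 1 (t : ℚ)] at h
  rw [sum_range_H_succ_div, ← add_assoc, ← sum_add_distrib]
  calc ∑ i ∈ range t, ((H t - H i) / ((t : ℚ) + 1 - i) + H i / ((t : ℚ) + 1 - i)) + H t
      = H t * ∑ i ∈ range t, 1 / ((t : ℚ) + 1 - i) + H t := by
        rw [mul_sum]
        exact congrArg (· + H t) (sum_congr rfl fun i _ => by ring)
    _ = H t * H (t + 1) := by
        rw [h]
        ring

lemma sum_range_H_sub_div_succ (n t : ℕ) :
    ∑ i ∈ range t, (H t - H i) / ((n : ℚ) + 1 + t + 1 - i)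
      = ∑ i ∈ range t, (H t - H i) / ((n : ℚ) + t + 1 - i)
        - (H (n + 1 + t) - H (n + 1)) / ((n : ℚ) + t + 2) := by
  have hx : (t : ℚ) ≤ n + t + 1 := by linarith [(n.cast_nonneg : (0 : ℚ) ≤ n)]
  have h := sum_range_H_sub_mul_one_div_sub_one_div t _ hx
  have hS := sum_range_one_div_add_sub (n + 1) t
  push_cast at hS
  rw [add_right_comm (n : ℚ) 1 t] at hS
  rw [hS, show (n : ℚ) + t + 1 + 1 = n + t + 2 by ring] at h
  rw [← h, eq_sub_iff_add_eq, ← sum_add_distrib]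
  exact sum_congr rfl fun i _ => by ring_nf

theorem sum_Icc_H_div_add_succ (t n : ℕ) :
    ∑ j ∈ Icc 1 n, H j / ((j : ℚ) + (t + 1))
      = (1 / 2) * (H (n + t + 1) ^ 2 - H2 (n + t + 1))
        + ∑ i ∈ range t, (H t - H i) / ((n : ℚ) + t + 1 - i)
        - (1 / 2) * (H (t + 1) ^ 2 - H2 (t + 1))
        - H t * H (t + 1)
        + ∑ i ∈ range t, H (i + 1) / ((t : ℚ) - i) := by
  induction n with
  | zero =>
    have := sum_range_H_sub_div_add_sum_range_H_succ_div t
    simp only [zero_add, Nat.cast_zero, Icc_eq_empty_of_lt zero_lt_one, sum_empty]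
    linarith
  | succ n ih =>
    rw [sum_Icc_succ_top (by omega), ih, show n + 1 + t + 1 = n + t + 1 + 1 by ring,
      half_sq_H_sub_H2_succ (n + t + 1)]
    push_cast
    rw [sum_range_H_sub_div_succ, add_right_comm n 1 t]
    ring

/-- Proposition 1: closed form for `∑_{j=1}^n H_j/(j+s)` for `s ≥ 3`. -/
theorem sum_divided_shifted_harmonic (n s : ℕ) (hs : 3 ≤ s) :
    ∑ j ∈ Finset.Icc 1 n, H j / ((j : ℚ) + s)
      = (1 / 2) * ((H (n + s)) ^ 2 - H2 (n + s))
        + ∑ i ∈ Finset.range (s - 1), (H (s - 1) - H i) / ((n + s - i : ℕ) : ℚ)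
        - (1 / 2) * ((H s) ^ 2 - H2 s)
        - H (s - 1) * H s
        + ∑ k ∈ Finset.Icc 1 (s - 1), H k / ((s - k : ℕ) : ℚ) := by
  obtain ⟨t, rfl⟩ : ∃ t, s = t + 1 := ⟨s - 1, by omega⟩
  have hB : ∑ i ∈ range t, (H t - H i) / ((n + (t + 1) - i : ℕ) : ℚ)
      = ∑ i ∈ range t, (H t - H i) / ((n : ℚ) + t + 1 - i) :=
    sum_congr rfl fun i hi => by
      rw [Nat.cast_sub (by linarith [mem_range.mp hi])]
      push_cast
      ring
  have hC : ∑ k ∈ Icc 1 t, H k / ((t + 1 - k : ℕ) : ℚ)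
      = ∑ i ∈ range t, H (i + 1) / ((t : ℚ) - i) := by
    rw [← Ico_add_one_right_eq_Icc, sum_Ico_eq_sum_range, add_tsub_cancel_right]
    exact sum_congr rfl fun i hi => by
      rw [add_comm 1 i, Nat.add_sub_add_right, Nat.cast_sub (mem_range.mp hi).le]
  rw [Nat.add_sub_cancel, hB, hC, ← add_assoc]
  push_cast
  exact sum_Icc_H_div_add_succ t n
end

section
/- Let p ≥ 5 be a prime. Then Σ_{k even, 2 ≤ k ≤ p−1} k^{p−2} ≡ −Σ_{k odd, 1 ≤ k ≤ p−2} k^{p−2} (mod p²). -/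
/-!
Both sums together are `S = ∑_{k=1}^{p-1} k^{p-2}`. Pairing `k` with `p - k` and expanding
`(p - k)^n` to first order in `p` (with `n = p - 2` odd) gives
`2 S ≡ n p ∑_{k=1}^{p-1} k^{p-3} (mod p²)`, and the last sum vanishes modulo `p` because
`p - 1 ∤ p - 3` when `p ≥ 5`. Hence `p² ∣ 2 S`, and `p` is odd.
-/

open Finset

theorem sq_dvd_pow_add_sub_pow_sub_mul {R : Type*} [CommRing R] (N x : R) {n : ℕ} (hn : Odd n) :
    N ^ 2 ∣ x ^ n + (N - x) ^ n - n * N * x ^ (n - 1) := by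
  have h := sq_dvd_add_pow_sub_sub N (-x) n
  rw [hn.neg_pow, (Nat.Odd.sub_odd hn odd_one).neg_pow] at h
  convert h using 1
  ring

theorem sum_Ico_one_intCast_reflect {M : Type*} [AddCommMonoid M] (f : ℤ → M) (N : ℕ) :
    ∑ k ∈ Ico 1 N, f (N - k) = ∑ k ∈ Ico 1 N, f k := by
  have h := sum_Ico_reflect (fun k : ℕ => f k) 1 (Nat.le_succ N)
  simp only [Nat.add_sub_cancel_left, Nat.add_sub_cancel] at h
  rw [← h]
  refine sum_congr rfl fun k hk => ?_
  rw [Nat.cast_sub (mem_Ico.1 hk).2.le]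

theorem sq_dvd_two_mul_sum_pow_sub {N n : ℕ} (hn : Odd n) :
    (N : ℤ) ^ 2 ∣
      2 * ∑ k ∈ Ico 1 N, (k : ℤ) ^ n - n * N * ∑ k ∈ Ico 1 N, (k : ℤ) ^ (n - 1) := by
  have h := dvd_sum fun k (_ : k ∈ Ico 1 N) => sq_dvd_pow_add_sub_pow_sub_mul (N : ℤ) k hn
  rwa [sum_sub_distrib, sum_add_distrib, sum_Ico_one_intCast_reflect (· ^ n), ← two_mul,
    ← mul_sum] at h

theorem ZMod.sum_range_natCast {M : Type*} [AddCommMonoid M] (p : ℕ) [NeZero p]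
    (f : ZMod p → M) : ∑ k ∈ range p, f k = ∑ x : ZMod p, f x :=
  sum_nbij' (↑) ZMod.val (by simp) (by simp [ZMod.val_lt])
    (fun _ hk => ZMod.val_cast_of_lt (mem_range.1 hk)) (fun x _ => ZMod.natCast_zmod_val x)
    (fun _ _ => rfl)

theorem Nat.Prime.intCast_dvd_sum_Ico_pow {p m : ℕ} (hp : p.Prime) (hm0 : m ≠ 0)
    (hm : m < p - 1) : (p : ℤ) ∣ ∑ k ∈ Ico 1 p, (k : ℤ) ^ m := by
  have : Fact p.Prime := ⟨hp⟩
  rw [← ZMod.intCast_zmod_eq_zero_iff_dvd]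
  push_cast
  have h := FiniteField.sum_pow_lt_card_sub_one (K := ZMod p) m (by rwa [ZMod.card])
  rwa [← ZMod.sum_range_natCast, sum_range_eq_add_Ico _ hp.pos, Nat.cast_zero, zero_pow hm0,
    zero_add] at h

theorem sum_filter_even_add_sum_filter_odd {M : Type*} [AddCommMonoid M] {N : ℕ} (hN : Odd N)
    (f : ℕ → M) :
    ∑ k ∈ (Icc 2 (N - 1)).filter Even, f k + ∑ k ∈ (Icc 1 (N - 2)).filter Odd, f k =
      ∑ k ∈ Ico 1 N, f k := by
  obtain ⟨r, rfl⟩ := hN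
  have h_even : (Icc 2 (2 * r + 1 - 1)).filter Even = (Ico 1 (2 * r + 1)).filter Even := by
    ext k; simp only [mem_filter, mem_Icc, mem_Ico, Nat.even_iff]; omega
  have h_odd : (Icc 1 (2 * r + 1 - 2)).filter Odd = (Ico 1 (2 * r + 1)).filter (¬Even ·) := by
    ext k; simp only [mem_filter, mem_Icc, mem_Ico, Nat.odd_iff, Nat.even_iff]; omega
  rw [h_even, h_odd, sum_filter_add_sum_filter_not]

/-- Modulo `p²`, the sum of `k^{p-2}` over even `k` in `{2,…,p−1}` is the negative of
the sum over odd `k` in `{1,…,p−2}`. -/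
theorem even_odd_power_sums (p : ℕ) (hp : p.Prime) (hp5 : 5 ≤ p) :
    ((p : ℤ) ^ 2) ∣
      (∑ k ∈ (Finset.Icc 2 (p - 1)).filter (fun k => Even k), (k : ℤ) ^ (p - 2))
        - (-∑ k ∈ (Finset.Icc 1 (p - 2)).filter (fun k => Odd k), (k : ℤ) ^ (p - 2)) := by
  have hp_odd : Odd p := hp.odd_of_ne_two (by omega)
  rw [sub_neg_eq_add, sum_filter_even_add_sum_filter_odd hp_odd]
  set S := ∑ k ∈ Ico 1 p, (k : ℤ) ^ (p - 2)
  have h_pair :=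
    sq_dvd_two_mul_sum_pow_sub (N := p) (Nat.Odd.sub_even (by omega) hp_odd even_two)
  have h_low : (p : ℤ) ∣ ∑ k ∈ Ico 1 p, (k : ℤ) ^ (p - 2 - 1) :=
    hp.intCast_dvd_sum_Ico_pow (by omega) (by omega)
  have h_two_mul : (p : ℤ) ^ 2 ∣ 2 * S := by
    have h_sq : (p : ℤ) ^ 2 ∣ p * ∑ k ∈ Ico 1 p, (k : ℤ) ^ (p - 2 - 1) := by
      rw [sq]; exact mul_dvd_mul_left _ h_low
    simpa only [mul_assoc, sub_add_cancel] using
      dvd_add h_pair (h_sq.mul_left ((p - 2 : ℕ) : ℤ))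
  have h_coprime : IsCoprime ((p : ℤ) ^ 2) 2 :=
    (Nat.isCoprime_iff_coprime.2 (Nat.coprime_two_right.2 hp_odd)).pow_left
  exact h_coprime.dvd_of_dvd_mul_left h_two_mul
end

section
/- Let p ≥ 5 be a prime. Then Σ_{k=1}^{(p−1)/2} k^{p−3} ≡ 0 (mod p). -/
/-!
As `p - 3` is even with `0 < p - 3 < p - 1`, the map `x ↦ x ^ (p - 3)` is an even function on
`𝔽_p` whose sum over all of `𝔽_p` vanishes. Pairing `x` with `-x`, that sum is twice the half sum,
and `2` is invertible modulo `p`.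
-/

open Finset

namespace ZMod

theorem sum_range_natCast_s7 {n : ℕ} [NeZero n] {M : Type*} [AddCommMonoid M] (f : ZMod n → M) :
    ∑ k ∈ range n, f k = ∑ x, f x :=
  sum_nbij' (↑) val (fun _ _ ↦ mem_univ _) (fun x _ ↦ mem_range.mpr x.val_lt)
    (fun _ hk ↦ val_cast_of_lt (mem_range.mp hk)) (fun x _ ↦ natCast_zmod_val x) (fun _ _ ↦ rfl)

theorem sum_eq_add_two_nsmul_sum_Icc_of_even {p : ℕ} [NeZero p] (hp : Odd p) {M : Type*}
    [AddCommMonoid M] {f : ZMod p → M} (hf : f.Even) :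
    ∑ x, f x = f 0 + 2 • ∑ k ∈ Icc 1 ((p - 1) / 2), f k := by
  obtain ⟨m, hm⟩ := hp
  have hIcc : ∑ k ∈ Icc 1 m, f k = ∑ k ∈ range m, f ↑(k + 1) := by
    rw [← Ico_add_one_right_eq_Icc, sum_Ico_eq_sum_range, Nat.add_sub_cancel]
    simp only [add_comm 1]
  have hreflect : ∑ k ∈ range m, f ↑(m + k + 1) = ∑ k ∈ range m, f ↑(k + 1) := by
    rw [← sum_range_reflect]
    refine sum_congr rfl fun k hk ↦ ?_
    -- after reflecting, `m + k + 1` becomes `p - (k + 1)`, which is `-(k + 1)` in `ZMod p`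
    have hsum : m + (m - 1 - k) + 1 + (k + 1) = p := by
      have := mem_range.mp hk
      omega
    rw [← hf]
    congr 1
    rw [neg_eq_iff_add_eq_zero, ← Nat.cast_add, hsum, natCast_self]
  have hrange : range p = range (m + m + 1) := by rw [hm, two_mul]
  rw [← sum_range_natCast_s7, hrange, sum_range_succ', sum_range_add, hreflect,
    show (p - 1) / 2 = m by omega, hIcc, two_nsmul, add_comm, Nat.cast_zero]

theorem sum_Icc_pow_eq_zero {p : ℕ} [Fact p.Prime] (hp : p ≠ 2) {e : ℕ} (he : Even e)
    (he0 : e ≠ 0) (hep : e < p - 1) : ∑ k ∈ Icc 1 ((p - 1) / 2), (k : ZMod p) ^ e = 0 := by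
  have htotal := sum_eq_add_two_nsmul_sum_Icc_of_even ((Fact.out : p.Prime).odd_of_ne_two hp)
    (f := fun x : ZMod p ↦ x ^ e) he.neg_pow
  rw [FiniteField.sum_pow_lt_card_sub_one _ _ (by rwa [ZMod.card]), zero_pow he0, zero_add,
    two_nsmul, ← two_mul, eq_comm] at htotal
  exact (mul_eq_zero.mp htotal).resolve_left (Ring.two_ne_zero (by rwa [ringChar_zmod_n]))

end ZMod

/-- `∑_{k=1}^{(p−1)/2} k^{p−3} ≡ 0 (mod p)`. -/
theorem sum_half_powers_p_sub_three (p : ℕ) (hp : p.Prime) (hp5 : 5 ≤ p) :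
    (p : ℤ) ∣ ∑ k ∈ Finset.Icc 1 ((p - 1) / 2), (k : ℤ) ^ (p - 3) := by
  have : Fact p.Prime := ⟨hp⟩
  have heven : Even (p - 3) := (hp.odd_of_ne_two (by omega)).tsub_odd (by decide)
  rw [← ZMod.intCast_zmod_eq_zero_iff_dvd]
  push_cast
  exact ZMod.sum_Icc_pow_eq_zero (by omega) heven (by omega) (by omega)
end

section
/- Let p ≥ 5 be a prime. Then the Fermat quotient q_2(p) = (2^{p−1} − 1)/p satisfies q_2(p) ≡ H'_{p−1} (mod p), where H'_{p−1} = 1 + 1/3 + 1/5 + ⋯ + 1/(p−2) is the sum of the reciprocals of the odd integers from 1 to p−2. -/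
open Finset

section RatCongr

variable {p k : ℕ} {x y z x' y' : ℚ}

theorem ratCongr_refl (p k : ℕ) (x : ℚ) : ratCongr p k x x := by
  simp only [ratCongr, sub_self, padicNorm.zero]
  positivity

variable [Fact p.Prime]

theorem ratCongr.trans (h₁ : ratCongr p k x y) (h₂ : ratCongr p k y z) : ratCongr p k x z := by
  unfold ratCongr at *
  rw [← sub_add_sub_cancel x y z]
  exact padicNorm.nonarchimedean.trans (max_le h₁ h₂)

theorem ratCongr.sub (h₁ : ratCongr p k x y) (h₂ : ratCongr p k x' y') :
    ratCongr p k (x - x') (y - y') := by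
  unfold ratCongr at *
  rw [sub_sub_sub_comm]
  exact padicNorm.sub.trans (max_le h₁ h₂)

theorem ratCongr_sum {ι : Type*} {s : Finset ι} {f g : ι → ℚ}
    (h : ∀ i ∈ s, ratCongr p k (f i) (g i)) :
    ratCongr p k (∑ i ∈ s, f i) (∑ i ∈ s, g i) := by
  unfold ratCongr at *
  rw [← sum_sub_distrib]
  exact padicNorm.sum_le' h (by positivity)

theorem ratCongr_mul_left_iff {c : ℚ} (hc : padicNorm p c = 1) :
    ratCongr p k (c * x) (c * y) ↔ ratCongr p k x y := by
  rw [ratCongr, ratCongr, ← mul_sub, padicNorm.mul, hc, one_mul]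

theorem ratCongr_intCast_div {a b c : ℤ} (hab : (p : ℤ) ^ k ∣ a - b)
    (hc : ¬ (p : ℤ) ∣ c) : ratCongr p k (a / c) (b / c) := by
  rw [ratCongr, ← sub_div, padicNorm.div, (padicNorm.int_eq_one_iff c).2 hc, div_one]
  exact_mod_cast padicNorm.dvd_iff_norm_le.1 (by exact_mod_cast hab)

theorem padicNorm_two_eq_one (hp : p ≠ 2) : padicNorm p 2 = 1 := by
  exact_mod_cast (padicNorm.nat_eq_one_iff 2).2
    fun h => hp ((Nat.prime_dvd_prime_iff_eq Fact.out Nat.prime_two).1 h)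

end RatCongr

theorem Nat.Prime.choose_pred_modEq {p k : ℕ} (hp : p.Prime) (hk : k < p) :
    ((p - 1).choose k : ℤ) ≡ (-1) ^ k [ZMOD p] := by
  induction k with
  | zero => simp
  | succ k ih =>
    have pascal : ((p - 1).choose (k + 1) : ℤ) = p.choose (k + 1) - (p - 1).choose k := by
      have := Nat.choose_succ_succ' (p - 1) k
      rw [Nat.sub_add_cancel hp.one_le] at this
      rw [this]; push_cast; ring
    have hdvd : (p : ℤ) ∣ p.choose (k + 1) :=
      Int.natCast_dvd_natCast.2 (hp.dvd_choose_self k.succ_ne_zero hk)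
    rw [pascal, pow_succ, mul_neg_one, ← zero_sub]
    exact (Int.modEq_zero_iff_dvd.2 hdvd).sub (ih (by omega))

theorem Nat.cast_choose_div_eq {n k : ℕ} (hn : 0 < n) (hk : 0 < k) :
    (n.choose k : ℚ) / n = ((n - 1).choose (k - 1) : ℚ) / k := by
  obtain ⟨n, rfl⟩ : ∃ m, n = m + 1 := ⟨n - 1, by omega⟩
  obtain ⟨k, rfl⟩ : ∃ m, k = m + 1 := ⟨k - 1, by omega⟩
  rw [div_eq_div_iff (by positivity) (by positivity)]
  exact_mod_cast (Nat.add_one_mul_choose_eq n k).symm.trans (mul_comm _ _)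

theorem Nat.sum_Icc_choose_eq_two_pow_sub_two {n : ℕ} (hn : 0 < n) :
    ∑ k ∈ Icc 1 (n - 1), (n.choose k : ℚ) = 2 ^ n - 2 := by
  have total : ∑ k ∈ range (n + 1), (n.choose k : ℚ) = 2 ^ n := by
    exact_mod_cast Nat.sum_range_choose n
  rw [range_eq_Ico, sum_Ico_succ_top (by omega), sum_eq_sum_Ico_succ_bot hn] at total
  have : Icc 1 (n - 1) = Ico 1 n := by ext; simp only [mem_Icc, mem_Ico]; omega
  rw [this]
  simp only [Nat.choose_zero_right, Nat.choose_self, Nat.cast_one] at total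
  linarith

theorem two_mul_fermat_quotient {n : ℕ} (hn : 0 < n) :
    2 * (((2 : ℚ) ^ (n - 1) - 1) / n) =
      ∑ k ∈ Icc 1 (n - 1), ((n - 1).choose (k - 1) : ℚ) / k := by
  calc 2 * (((2 : ℚ) ^ (n - 1) - 1) / n)
      = (2 ^ n - 2) / n := by
        rw [← mul_div_assoc, mul_sub, ← pow_succ', Nat.sub_add_cancel hn, mul_one]
    _ = ∑ k ∈ Icc 1 (n - 1), (n.choose k : ℚ) / n := by
        rw [← Nat.sum_Icc_choose_eq_two_pow_sub_two hn, sum_div]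
    _ = _ := sum_congr rfl fun k hk => Nat.cast_choose_div_eq hn (by simp at hk; omega)

theorem ratCongr_sum_choose_pred_div {p : ℕ} [Fact p.Prime] :
    ratCongr p 1 (∑ k ∈ Icc 1 (p - 1), ((p - 1).choose (k - 1) : ℚ) / k)
      (∑ k ∈ Icc 1 (p - 1), (-1 : ℚ) ^ (k + 1) / k) := by
  have hp : p.Prime := Fact.out
  refine ratCongr_sum fun k hk => ?_
  rw [mem_Icc] at hk
  have sign : (-1 : ℤ) ^ (k - 1) = (-1) ^ (k + 1) := by
    rw [show k + 1 = k - 1 + 2 by omega, pow_add]; norm_num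
  have hab : (p : ℤ) ^ 1 ∣ (p - 1).choose (k - 1) - (-1) ^ (k + 1) := by
    rw [pow_one, ← sign]
    exact (hp.choose_pred_modEq (by omega)).symm.dvd
  have hk : ¬ (p : ℤ) ∣ k :=
    Int.natCast_dvd_natCast.not.2 (Nat.not_dvd_of_pos_of_lt (by omega) (by omega))
  have := ratCongr_intCast_div hab hk
  push_cast at this
  exact this

theorem ratCongr_harmonic_pred_zero {p : ℕ} [Fact p.Prime] (hp2 : p ≠ 2) :
    ratCongr p 1 (harmonic (p - 1)) 0 := by
  have hp : p.Prime := Fact.out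
  have reflect : harmonic (p - 1) = ∑ k ∈ Icc 1 (p - 1), ((p - k : ℕ) : ℚ)⁻¹ := by
    rw [harmonic_eq_sum_Icc]
    refine sum_nbij' (p - ·) (p - ·) ?_ ?_ ?_ ?_ fun k hk => ?_
    any_goals intro k hk; simp only [mem_Icc] at hk ⊢; omega
    rw [mem_Icc] at hk
    rw [Nat.sub_sub_self (by omega)]
  have pair :
      ∀ k ∈ Icc 1 (p - 1), ratCongr p 1 ((k : ℚ)⁻¹ + ((p - k : ℕ) : ℚ)⁻¹) 0 := by
    intro k hk
    rw [mem_Icc] at hk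
    have hk0 : (k : ℚ) ≠ 0 := by exact_mod_cast (by omega : k ≠ 0)
    have hpk : (p : ℚ) - k ≠ 0 := sub_ne_zero.2 (by exact_mod_cast (by omega : p ≠ k))
    have sum_eq : (k : ℚ)⁻¹ + ((p - k : ℕ) : ℚ)⁻¹ = p / (k * (p - k : ℕ)) := by
      push_cast [Nat.cast_sub (by omega : k ≤ p)]
      field_simp
      ring
    have coprime : ¬ (p : ℤ) ∣ ((k * (p - k) : ℕ) : ℤ) := by
      rw [Int.natCast_dvd_natCast, hp.dvd_mul, not_or]
      exact ⟨Nat.not_dvd_of_pos_of_lt (by omega) (by omega),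
        Nat.not_dvd_of_pos_of_lt (by omega) (by omega)⟩
    rw [sum_eq]
    simpa using ratCongr_intCast_div (a := p) (b := 0) (by simp) coprime
  rw [← ratCongr_mul_left_iff (padicNorm_two_eq_one hp2), mul_zero, two_mul]
  nth_rw 2 [reflect]
  rw [harmonic_eq_sum_Icc, ← sum_add_distrib]
  simpa using ratCongr_sum pair

theorem sum_Icc_neg_one_pow_div (n : ℕ) :
    ∑ k ∈ Icc 1 n, (-1 : ℚ) ^ (k + 1) / k =
      2 * ∑ k ∈ Icc 1 n with Odd k, (k : ℚ)⁻¹ - harmonic n := by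
  have term : ∀ k : ℕ,
      (-1 : ℚ) ^ (k + 1) / k = 2 * (if Odd k then (k : ℚ)⁻¹ else 0) - (k : ℚ)⁻¹ := by
    intro k
    rcases Nat.even_or_odd k with h | h
    · simp [pow_succ, h.neg_one_pow, Nat.not_odd_iff_even.2 h, div_eq_mul_inv]
    · simp [pow_succ, h.neg_one_pow, h, div_eq_mul_inv]; ring
  simp only [term, sum_sub_distrib, ← mul_sum, ← sum_filter, harmonic_eq_sum_Icc]

/-- The Fermat quotient `q_2(p)` is congruent mod `p` to the sum of reciprocals of
the odd integers from `1` to `p−2`. -/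
theorem fermat_quotient_odd_reciprocals (p : ℕ) (hp : p.Prime) (hp5 : 5 ≤ p) :
    ratCongr p 1
      (((2 : ℚ) ^ (p - 1) - 1) / p)
      (∑ i ∈ (Finset.Icc 1 (p - 2)).filter (fun i => Odd i), 1 / (i : ℚ)) := by
  have := Fact.mk hp
  have hp2 : p ≠ 2 := by omega
  have odd_range : (Icc 1 (p - 2)).filter Odd = (Icc 1 (p - 1)).filter Odd := by
    have := Nat.odd_iff.1 (hp.odd_of_ne_two hp2)
    ext i
    simp only [mem_filter, mem_Icc, Nat.odd_iff]
    omega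
  rw [← ratCongr_mul_left_iff (padicNorm_two_eq_one hp2), two_mul_fermat_quotient hp.pos]
  refine ratCongr_sum_choose_pred_div.trans ?_
  rw [sum_Icc_neg_one_pow_div, odd_range]
  simpa [one_div] using (ratCongr_refl p 1 _).sub (ratCongr_harmonic_pred_zero hp2)
end

section
/- Let p ≥ 5 be a prime. Then the Fermat quotient q_2(p) = (2^{p−1} − 1)/p satisfies q_2(p) ≡ 2·N_{p−2} − 1 (mod p). -/
/-- Number of ascents of a permutation `σ` of `{1,…,k}`: indices `i` (0-based,
`i+1 < k`) with `σ(i+1) > σ(i)`. -/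
def ascents (k : ℕ) (σ : Equiv.Perm (Fin k)) : ℕ :=
  (Finset.univ.filter fun i : Fin k =>
    ∃ h : (i : ℕ) + 1 < k, σ i < σ ⟨(i : ℕ) + 1, h⟩).card

/-- `N_k`: the number of permutations of `{1,…,k}` with an even number of ascents. -/
def N (k : ℕ) : ℕ :=
  (Finset.univ.filter fun σ : Equiv.Perm (Fin k) => Even (ascents k σ)).card

/-!
Writing `q = q_2(p)`, the binomial theorem gives `2pq = 2^p - 2 = ∑_{0<j<p} C(p,j)`, and
`C(p,j)/p = C(p-1,j-1)/j ≡ (-1)^(j-1) j^(p-2) (mod p)`, so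
`2q ≡ ∑_{j=1}^{p-1} (-1)^(j-1) j^(p-2)`.
Worpitzky's identity `n^k = ∑_{σ ∈ S_k} C(n + asc σ, k)` with `k = p - 2` turns this into
`∑_σ ∑_j (-1)^(j-1) C(j + asc σ, p - 2)`. Modulo `p` only the terms with
`j + asc σ ∈ {p - 2, p - 1}` survive, so the inner sum is `2 (-1)^(asc σ)`, and
`2q ≡ 2 ∑_σ (-1)^(asc σ) = 2 (2 N_{p-2} - (p-2)!) ≡ 2 (2 N_{p-2} - 1)` by Wilson's theorem.

Worpitzky's identity follows by induction on `k`, inserting the new maximal letter into a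
permutation of `S_k`: the `asc σ + 1` slots at the front or right after an ascent keep the number
of ascents, the other `k - asc σ` slots raise it by one.
-/

open Finset
open scoped Nat

def ascentSet (w : ℕ → ℕ) (k : ℕ) : Finset ℕ :=
  (range (k - 1)).filter fun i => w i < w (i + 1)

def insertAt (w : ℕ → ℕ) (s m : ℕ) (i : ℕ) : ℕ :=
  if i < s then w i else if i = s then m else w (i - 1)

def ascentIncrement (A : Finset ℕ) (s : ℕ) : ℕ :=
  if s = 0 ∨ s - 1 ∈ A then 0 else 1

def natSuccAbove (s i : ℕ) : ℕ :=
  if i < s then i else i + 1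

theorem natSuccAbove_injective {s : ℕ} : (natSuccAbove s).Injective := by
  intro a b hab
  simp only [natSuccAbove] at hab
  split_ifs at hab <;> omega

theorem mem_image_natSuccAbove {A : Finset ℕ} {s i : ℕ} :
    i ∈ A.image (natSuccAbove s) ↔ (i < s ∧ i ∈ A) ∨ (s < i ∧ i - 1 ∈ A) := by
  simp only [mem_image, natSuccAbove]
  constructor
  · rintro ⟨j, hj, rfl⟩
    split_ifs with h
    · exact Or.inl ⟨h, hj⟩
    · exact Or.inr ⟨by omega, by simpa using hj⟩
  · rintro (⟨h, hi⟩ | ⟨h, hi⟩)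
    · exact ⟨i, hi, if_pos h⟩
    · exact ⟨i - 1, hi, by rw [if_neg (by omega)]; omega⟩

section Word

variable {w : ℕ → ℕ} {k s m : ℕ}

theorem mem_ascentSet {i : ℕ} : i ∈ ascentSet w k ↔ i + 1 < k ∧ w i < w (i + 1) := by
  simp only [ascentSet, mem_filter, mem_range]
  omega

theorem ascentSet_subset_range : ascentSet w k ⊆ range k :=
  (filter_subset _ _).trans (range_mono (Nat.sub_le k 1))

theorem mem_ascentSet_insertAt (hs : s ≤ k) (hm : ∀ j < k, w j < m) {i : ℕ} :
    i ∈ ascentSet (insertAt w s m) (k + 1) ↔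
      i + 1 = s ∨ (i + 1 < s ∧ i ∈ ascentSet w k) ∨
        (s < i ∧ i - 1 ∈ ascentSet w k) := by
  simp only [mem_ascentSet, insertAt]
  rcases lt_trichotomy (i + 1) s with h | h | h
  · simp only [if_pos h, if_pos (show i < s by omega)]
    omega
  · simp only [if_pos (show i < s by omega), if_neg h.not_lt, if_pos h]
    have := hm i (by omega)
    omega
  · rcases Nat.lt_or_ge s i with h' | h'
    · simp only [if_neg (show ¬ i < s by omega), if_neg (show i ≠ s by omega),
        if_neg (show ¬ i + 1 < s by omega), if_neg (show i + 1 ≠ s by omega),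
        show i - 1 + 1 = i by omega, Nat.add_sub_cancel]
      omega
    · have hi : s = i := by omega
      subst hi
      simp only [lt_irrefl, if_false, if_true, if_neg (show ¬ s + 1 < s by omega),
        if_neg (show s + 1 ≠ s by omega), Nat.add_sub_cancel]
      constructor
      · rintro ⟨hsk, hlt⟩
        have := hm s (by omega)
        omega
      · rintro (h | ⟨h, -⟩ | ⟨⟨⟩, -⟩) <;> omega

theorem card_ascentSet_insertAt (hs : s ≤ k) (hm : ∀ j < k, w j < m) :
    #(ascentSet (insertAt w s m) (k + 1)) =
      #(ascentSet w k) + ascentIncrement (ascentSet w k) s := by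
  unfold ascentIncrement
  rcases Nat.eq_zero_or_pos s with rfl | hs0
  · have : ascentSet (insertAt w 0 m) (k + 1) = (ascentSet w k).image (natSuccAbove 0) := by
      ext i
      rw [mem_ascentSet_insertAt hs hm, mem_image_natSuccAbove]
      simp
    rw [this, card_image_of_injective _ natSuccAbove_injective, if_pos (Or.inl rfl), add_zero]
  · have : ascentSet (insertAt w s m) (k + 1) =
        insert (s - 1) ((ascentSet w k).image (natSuccAbove s)) := by
      ext i
      rw [mem_ascentSet_insertAt hs hm, mem_insert, mem_image_natSuccAbove]
      by_cases hi : i + 1 = s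
      · exact iff_of_true (Or.inl hi) (Or.inl (by omega))
      · simp only [hi, false_or, show i ≠ s - 1 by omega, show i + 1 < s ↔ i < s by omega]
    simp only [this, hs0.ne', false_or]
    by_cases h : s - 1 ∈ ascentSet w k
    · rw [card_insert_of_mem (mem_image_natSuccAbove.2 (Or.inl ⟨by omega, h⟩)),
        card_image_of_injective _ natSuccAbove_injective, if_pos h, add_zero]
    · rw [card_insert_of_notMem (by
        rw [mem_image_natSuccAbove]
        rintro (⟨-, h'⟩ | ⟨h', -⟩)
        exacts [h h', by omega]),
        card_image_of_injective _ natSuccAbove_injective, if_neg h]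

end Word

def permWord (k : ℕ) (σ : Equiv.Perm (Fin k)) (i : ℕ) : ℕ :=
  if h : i < k then σ ⟨i, h⟩ else 0

def insertMax {k : ℕ} (σ : Equiv.Perm (Fin k)) (s : Fin (k + 1)) : Equiv.Perm (Fin (k + 1)) :=
  (finSuccEquiv' s).trans ((Equiv.optionCongr σ).trans finSuccEquivLast.symm)

section Perm

variable {k : ℕ}

@[simp]
theorem insertMax_apply_self (σ : Equiv.Perm (Fin k)) (s : Fin (k + 1)) :
    insertMax σ s s = Fin.last k := by
  simp [insertMax]

@[simp]
theorem insertMax_apply_succAbove (σ : Equiv.Perm (Fin k)) (s : Fin (k + 1)) (j : Fin k) :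
    insertMax σ s (s.succAbove j) = (σ j).castSucc := by
  simp [insertMax]

theorem insertMax_bijective (k : ℕ) :
    Function.Bijective fun x : Equiv.Perm (Fin k) × Fin (k + 1) => insertMax x.1 x.2 := by
  refine (Fintype.bijective_iff_injective_and_card _).2 ⟨?_, ?_⟩
  · rintro ⟨σ, s⟩ ⟨τ, t⟩ h
    simp only at h
    obtain rfl : s = t := (insertMax σ s).injective <| by
      rw [insertMax_apply_self, h, insertMax_apply_self]
    obtain rfl : σ = τ := Equiv.ext fun j => Fin.castSucc_injective _ <| by
      rw [← insertMax_apply_succAbove, h, insertMax_apply_succAbove]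
    rfl
  · simp [Fintype.card_perm, Nat.factorial_succ, mul_comm]

theorem permWord_lt (σ : Equiv.Perm (Fin k)) {i : ℕ} (hi : i < k) : permWord k σ i < k := by
  simp only [permWord, dif_pos hi]
  exact (σ _).isLt

theorem permWord_insertMax (σ : Equiv.Perm (Fin k)) (s : Fin (k + 1)) :
    permWord (k + 1) (insertMax σ s) = insertAt (permWord k σ) s k := by
  funext i
  simp only [permWord, insertAt]
  have hs := s.isLt
  rcases lt_trichotomy i s with h | rfl | h
  · have : (⟨i, by omega⟩ : Fin (k + 1)) = s.succAbove ⟨i, by omega⟩ := by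
      rw [Fin.succAbove_of_castSucc_lt _ _ (by simpa [Fin.lt_def] using h)]
      rfl
    rw [if_pos h, dif_pos (by omega), dif_pos (by omega), this, insertMax_apply_succAbove]
    rfl
  · rw [if_neg (lt_irrefl _), if_pos rfl, dif_pos hs, Fin.eta, insertMax_apply_self]
    rfl
  · rw [if_neg (by omega), if_neg (by omega)]
    by_cases hi : i < k + 1
    · have : (⟨i, hi⟩ : Fin (k + 1)) = s.succAbove ⟨i - 1, by omega⟩ := by
        rw [Fin.succAbove_of_le_castSucc _ _ (by simp [Fin.le_def]; omega)]
        ext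
        simp only [Fin.val_succ]
        omega
      rw [dif_pos hi, dif_pos (by omega), this, insertMax_apply_succAbove]
      rfl
    · rw [dif_neg hi, dif_neg (by omega)]

theorem ascents_eq_card_ascentSet (σ : Equiv.Perm (Fin k)) :
    ascents k σ = #(ascentSet (permWord k σ) k) := by
  rw [ascents, ← card_image_of_injective _ Fin.val_injective]
  congr 1
  ext i
  simp only [mem_image, mem_filter, mem_univ, true_and, mem_ascentSet, permWord]
  constructor
  · rintro ⟨i, ⟨h, hlt⟩, rfl⟩
    exact ⟨h, by rwa [dif_pos i.isLt, dif_pos h]⟩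
  · rintro ⟨h, hlt⟩
    refine ⟨⟨i, by omega⟩, ⟨h, ?_⟩, rfl⟩
    rwa [dif_pos (by omega), dif_pos h] at hlt

theorem ascents_insertMax (σ : Equiv.Perm (Fin k)) (s : Fin (k + 1)) :
    ascents (k + 1) (insertMax σ s) =
      ascents k σ + ascentIncrement (ascentSet (permWord k σ) k) s := by
  rw [ascents_eq_card_ascentSet, ascents_eq_card_ascentSet, permWord_insertMax,
    card_ascentSet_insertAt (by omega) fun _ => permWord_lt σ]

theorem ascents_le (σ : Equiv.Perm (Fin k)) : ascents k σ ≤ k - 1 := by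
  rw [ascents_eq_card_ascentSet]
  exact (card_filter_le _ _).trans (card_range _).le

end Perm

theorem sum_range_ascentIncrement {A : Finset ℕ} {k : ℕ} (hA : A ⊆ range k) :
    ∑ s ∈ range (k + 1), ascentIncrement A s = k - #A := by
  conv_rhs => rw [← card_range k, ← card_sdiff_of_subset hA, sdiff_eq_filter, card_filter]
  simp [sum_range_succ', ascentIncrement]

theorem sum_range_choose_add_ascentIncrement (n k : ℕ) {A : Finset ℕ} (hA : A ⊆ range k) :
    ∑ s ∈ range (k + 1), (n + #A + ascentIncrement A s).choose (k + 1) =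
      n * (n + #A).choose k := by
  set m := n + #A with hm
  have pascal : ∀ s, (m + ascentIncrement A s).choose (k + 1) =
      m.choose (k + 1) + ascentIncrement A s * m.choose k := by
    intro s
    unfold ascentIncrement
    split_ifs
    · simp
    · rw [Nat.choose_succ_succ', one_mul, add_comm]
  have hAk : #A ≤ k := by simpa using card_le_card hA
  rw [sum_congr rfl fun s _ => pascal s, sum_add_distrib, sum_const, card_range, smul_eq_mul,
    ← sum_mul, sum_range_ascentIncrement hA]
  rcases le_or_gt k m with hkm | hkm
  · rw [mul_comm (k + 1), Nat.choose_succ_right_eq, mul_comm, ← add_mul,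
      show m - k + (k - #A) = n by omega]
  · rw [Nat.choose_eq_zero_of_lt hkm, Nat.choose_eq_zero_of_lt (by omega)]
    simp

theorem sum_choose_add_ascents_eq_pow (k n : ℕ) :
    ∑ σ : Equiv.Perm (Fin k), (n + ascents k σ).choose k = n ^ k := by
  induction k with
  | zero => simp
  | succ k ih =>
    rw [← Fintype.sum_bijective _ (insertMax_bijective k) _ _ fun _ => rfl,
      Fintype.sum_prod_type, pow_succ', ← ih, mul_sum]
    refine sum_congr rfl fun σ _ => ?_
    simp only [ascents_insertMax, ← add_assoc, Fin.sum_univ_eq_sum_range (fun s =>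
      (n + ascents k σ + ascentIncrement (ascentSet (permWord k σ) k) s).choose (k + 1))]
    rw [ascents_eq_card_ascentSet]
    exact sum_range_choose_add_ascentIncrement n k ascentSet_subset_range

theorem sum_neg_one_pow_ascents {R : Type*} [CommRing R] (k : ℕ) :
    ∑ σ : Equiv.Perm (Fin k), (-1 : R) ^ ascents k σ = 2 * N k - k ! := by
  have parity (a : ℕ) : (-1 : R) ^ a = 2 * (if Even a then 1 else 0) - 1 := by
    rcases Nat.even_or_odd a with h | h
    · rw [h.neg_one_pow, if_pos h]; ring
    · rw [h.neg_one_pow, if_neg (Nat.not_even_iff_odd.2 h)]; ring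
  simp only [parity, sum_sub_distrib, ← mul_sum, sum_boole, N, sum_const, card_univ,
    Fintype.card_perm, Fintype.card_fin, nsmul_eq_mul, mul_one]

section Prime

variable {p : ℕ} [hp : Fact p.Prime]

theorem cast_choose_pred_eq_neg_one_pow {j : ℕ} (hj : j < p) :
    (((p - 1).choose j : ℕ) : ZMod p) = (-1) ^ j := by
  induction j with
  | zero => simp
  | succ j ih =>
    have pascal : (p - 1).choose j + (p - 1).choose (j + 1) = p.choose (j + 1) := by
      rw [← Nat.choose_succ_succ', Nat.sub_add_cancel hp.out.one_le]
    have hdvd : ((p.choose (j + 1) : ℕ) : ZMod p) = 0 :=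
      (ZMod.natCast_eq_zero_iff _ _).2 (hp.out.dvd_choose_self j.succ_ne_zero hj)
    rw [← pascal, Nat.cast_add, ih (by omega)] at hdvd
    linear_combination hdvd

theorem cast_choose_succ_div_eq {j : ℕ} (hj : j + 1 < p) :
    ((p.choose (j + 1) / p : ℕ) : ZMod p) = (-1) ^ j * ((j : ZMod p) + 1) ^ (p - 2) := by
  have hdvd := hp.out.dvd_choose_self j.succ_ne_zero (by omega)
  have hmul : p.choose (j + 1) / p * (j + 1) = (p - 1).choose j := by
    have := Nat.add_one_mul_choose_eq (p - 1) j
    rw [Nat.sub_add_cancel hp.out.one_le] at this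
    rw [Nat.div_mul_right_comm hdvd, ← this, Nat.mul_div_cancel_left _ hp.out.pos]
  have hfermat : ((j : ZMod p) + 1) ^ (p - 1) = 1 := by
    apply ZMod.pow_card_sub_one_eq_one
    exact_mod_cast (ZMod.natCast_eq_zero_iff _ _).not.2 (Nat.not_dvd_of_pos_of_lt j.succ_pos hj)
  have hcast := congrArg (Nat.cast : ℕ → ZMod p) hmul
  rw [Nat.cast_mul, cast_choose_pred_eq_neg_one_pow (by omega)] at hcast
  push_cast at hcast
  calc ((p.choose (j + 1) / p : ℕ) : ZMod p)
      = ((p.choose (j + 1) / p : ℕ) : ZMod p) * ((j : ZMod p) + 1) ^ (p - 1) := by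
        rw [hfermat, mul_one]
    _ = (-1) ^ j * ((j : ZMod p) + 1) ^ (p - 2) := by
        rw [show p - 1 = p - 2 + 1 by have := hp.out.two_le; omega, pow_succ', ← mul_assoc,
          hcast]

theorem cast_factorial_sub_two_eq_one : ((p - 2)! : ZMod p) = 1 := by
  have hwilson := ZMod.wilsons_lemma p
  rw [show p - 1 = p - 2 + 1 by have := hp.out.two_le; omega, Nat.factorial_succ, Nat.cast_mul,
    Nat.cast_succ, Nat.cast_sub hp.out.two_le, ZMod.natCast_self] at hwilson
  linear_combination -hwilson

theorem sum_neg_one_pow_mul_cast_choose (hp2 : p ≠ 2) {a : ℕ} (ha : a ≤ p - 3) :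
    ∑ j ∈ range (p - 1), (-1 : ZMod p) ^ j * ((j + 1 + a).choose (p - 2) : ℕ) =
      2 * (-1) ^ a := by
  have hodd := hp.out.odd_of_ne_two hp2
  have h3 : 3 ≤ p := by obtain ⟨t, ht⟩ := hodd; have := hp.out.two_le; omega
  rw [sum_eq_add (p - 3 - a) (p - 2 - a) (by omega) ?vanish (by simp; omega) (by simp; omega)]
  case vanish =>
    intro j hj hne
    rw [mem_range] at hj
    rcases Nat.lt_or_ge (j + 1 + a) (p - 2) with hlt | hge
    · rw [Nat.choose_eq_zero_of_lt hlt, Nat.cast_zero, mul_zero]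
    · rw [(ZMod.natCast_eq_zero_iff _ _).2 (hp.out.dvd_choose (by omega) (by omega) (by omega)),
        mul_zero]
  have hparity : (-1 : ZMod p) ^ (p - 3 - a) = (-1) ^ a := by
    obtain ⟨t, ht⟩ := hodd
    rw [neg_one_pow_eq_pow_mod_two, show (p - 3 - a) % 2 = a % 2 by omega,
      ← neg_one_pow_eq_pow_mod_two]
  rw [show p - 3 - a + 1 + a = p - 2 by omega, show p - 2 - a + 1 + a = p - 2 + 1 by omega,
    Nat.choose_self, Nat.choose_succ_self_right, show p - 2 - a = p - 3 - a + 1 by omega,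
    pow_succ, hparity, show p - 2 + 1 = p - 1 by omega, Nat.cast_sub hp.out.one_le,
    ZMod.natCast_self]
  push_cast
  ring

theorem mul_sum_choose_succ_div_eq :
    (p : ℤ) * ∑ j ∈ range (p - 1), ((p.choose (j + 1) / p : ℕ) : ℤ) = 2 ^ p - 2 := by
  have hsum := Nat.sum_range_choose p
  have h2 := hp.out.two_le
  rw [show p + 1 = p - 1 + 1 + 1 by omega, sum_range_succ, sum_range_succ',
    show p - 1 + 1 = p by omega, Nat.choose_self, Nat.choose_zero_right] at hsum
  have hterm : ∀ j ∈ range (p - 1),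
      (p : ℤ) * ((p.choose (j + 1) / p : ℕ) : ℤ) = (p.choose (j + 1) : ℤ) := by
    intro j hj
    rw [mem_range] at hj
    exact_mod_cast Nat.mul_div_cancel' (hp.out.dvd_choose_self j.succ_ne_zero (by omega))
  rw [mul_sum, sum_congr rfl hterm]
  have := congrArg (Nat.cast : ℕ → ℤ) hsum
  push_cast at this
  linarith

theorem two_mul_fermatQuotient_eq_sum (hp2 : p ≠ 2) :
    2 * ((2 ^ (p - 1) - 1) / p : ℤ) =
      ∑ j ∈ range (p - 1), ((p.choose (j + 1) / p : ℕ) : ℤ) := by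
  have hcop : IsCoprime (2 : ℤ) p :=
    Nat.isCoprime_iff_coprime.2 ((Nat.coprime_primes Nat.prime_two hp.out).2 hp2.symm)
  have hfermat : (p : ℤ) ∣ 2 ^ (p - 1) - 1 :=
    (Int.ModEq.pow_card_sub_one_eq_one hp.out hcop).symm.dvd
  refine mul_left_cancel₀ (Nat.cast_ne_zero.2 hp.out.ne_zero) ?_
  rw [mul_sum_choose_succ_div_eq, mul_left_comm, Int.mul_ediv_cancel' hfermat, mul_sub,
    ← pow_succ', Nat.sub_add_cancel hp.out.one_le, mul_one]

theorem cast_sum_choose_succ_div_eq (hp2 : p ≠ 2) :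
    ((∑ j ∈ range (p - 1), ((p.choose (j + 1) / p : ℕ) : ℤ) : ℤ) : ZMod p) =
      2 * (2 * N (p - 2) - 1) := by
  simp only [Int.cast_sum, Int.cast_natCast]
  calc ∑ j ∈ range (p - 1), ((p.choose (j + 1) / p : ℕ) : ZMod p)
      = ∑ j ∈ range (p - 1), (-1) ^ j * ((j : ZMod p) + 1) ^ (p - 2) :=
        sum_congr rfl fun j hj => cast_choose_succ_div_eq (by rw [mem_range] at hj; omega)
    _ = ∑ j ∈ range (p - 1), (-1) ^ j *
          ∑ σ : Equiv.Perm (Fin (p - 2)),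
            ((j + 1 + ascents (p - 2) σ).choose (p - 2) : ZMod p) := by
        refine sum_congr rfl fun j _ => ?_
        have := congrArg (Nat.cast : ℕ → ZMod p) (sum_choose_add_ascents_eq_pow (p - 2) (j + 1))
        push_cast at this
        rw [this]
    _ = ∑ σ : Equiv.Perm (Fin (p - 2)), 2 * (-1) ^ ascents (p - 2) σ := by
        simp only [mul_sum]
        rw [sum_comm]
        refine sum_congr rfl fun σ _ => ?_
        exact_mod_cast sum_neg_one_pow_mul_cast_choose hp2 ((ascents_le σ).trans (by omega))
    _ = 2 * (2 * N (p - 2) - 1) := by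
        rw [← mul_sum, sum_neg_one_pow_ascents, cast_factorial_sub_two_eq_one]

end Prime

/-- Result 2: the Fermat quotient `q_2(p) = (2^{p−1}−1)/p` satisfies
`q_2(p) ≡ 2N_{p−2} − 1 (mod p)`. -/
theorem fermat_quotient_eq_two_N_sub_one (p : ℕ) (hp : p.Prime) (hp5 : 5 ≤ p) :
    (p : ℤ) ∣ ((2 ^ (p - 1) - 1) / p - (2 * (N (p - 2) : ℤ) - 1)) := by
  have := Fact.mk hp
  have hp2 : p ≠ 2 := by omega
  have h2 : (2 : ZMod p) ≠ 0 := Ring.two_ne_zero (by rwa [ZMod.ringChar_zmod_n])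
  rw [← ZMod.intCast_zmod_eq_zero_iff_dvd, Int.cast_sub, sub_eq_zero]
  refine mul_left_cancel₀ h2 ?_
  have := congrArg (Int.cast : ℤ → ZMod p) (two_mul_fermatQuotient_eq_sum hp2)
  rw [cast_sum_choose_succ_div_eq hp2] at this
  exact_mod_cast this
end
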